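/- Let {U_i}_{i ∈ I} be a finite set of d×d unitary matrices satisfying tr(U_i† U_j) = 0 for all i ≠ j, and let T be a mixed unitary map T(X) = ∑_{i ∈ I} r_i U_i X U_i† with real coefficients r_i satisfying ∑_i r_i = 1. Then ν(T) = log₂(∑_{i ∈ I} |r_i|) = log₂(‖J_T‖₁ / d), where J_T is the Choi matrix of T. -/

import Mathlib

open scoped Kronecker ComplexOrder
open Matrix

noncomputable section

/-- `id_k ⊗ N` applied blockwise. -/
def idTensor {n m : Type*} (k : Type*)
    (N : Matrix n n ℂ → Matrix m m ℂ)
    (M : Matrix (k × n) (k × n) ℂ) : Matrix (k × m) (k × m) ℂ :=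
  Matrix.of fun p q => N (Matrix.of fun a b => M (p.1, a) (q.1, b)) p.2 q.2

/-- Trace-preserving. -/
def IsTP {n m : Type*} [Fintype n] [Fintype m]
    (N : Matrix n n ℂ → Matrix m m ℂ) : Prop :=
  ∀ X, (N X).trace = X.trace

/-- Hermitian-preserving. -/
def IsHP {n m : Type*} (N : Matrix n n ℂ → Matrix m m ℂ) : Prop :=
  ∀ X, X.IsHermitian → (N X).IsHermitian

/-- Completely positive: for every `k`, `id_k ⊗ N` preserves positive semidefiniteness. -/
def IsCP {n m : Type*} [Fintype n] [Fintype m]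
    (N : Matrix n n ℂ → Matrix m m ℂ) : Prop :=
  ∀ (k : ℕ) (M : Matrix (Fin k × n) (Fin k × n) ℂ),
    M.PosSemidef → (idTensor (Fin k) N M).PosSemidef

/-- Completely positive and trace-preserving (quantum channel). -/
def IsCPTP {n m : Type*} [Fintype n] [Fintype m]
    (N : Matrix n n ℂ → Matrix m m ℂ) : Prop :=
  IsLinearMap ℂ N ∧ IsCP N ∧ IsTP N

/-- Completely positive and trace non-increasing. -/
def IsCPTN {n m : Type*} [Fintype n] [Fintype m]
    (N : Matrix n n ℂ → Matrix m m ℂ) : Prop :=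
  IsLinearMap ℂ N ∧ IsCP N ∧ ∀ X : Matrix n n ℂ, X.PosSemidef → (N X).trace ≤ X.trace

/-- Costs of finite quasiprobability decompositions of `N` into CPTP maps. -/
def decompCosts {n m : Type*} [Fintype n] [Fintype m]
    (N : Matrix n n ℂ → Matrix m m ℂ) : Set ℝ :=
  { c | ∃ (s : ℕ) (η : Fin s → ℝ) (O : Fin s → (Matrix n n ℂ → Matrix m m ℂ)),
      (∀ i, IsCPTP (O i)) ∧ (∀ X, N X = ∑ i, (η i : ℂ) • O i X) ∧ c = ∑ i, |η i| }

/-- The physical implementability `ν(N)`. -/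
noncomputable def nu {n m : Type*} [Fintype n] [Fintype m]
    (N : Matrix n n ℂ → Matrix m m ℂ) : ℝ :=
  Real.logb 2 (sInf (decompCosts N))

/-- The Choi matrix of a linear map. -/
def choiMatrix {n m : Type*} [DecidableEq n]
    (N : Matrix n n ℂ → Matrix m m ℂ) : Matrix (n × m) (n × m) ℂ :=
  Matrix.of fun p q => N (Matrix.single p.1 q.1 1) p.2 q.2

/-- Partial trace over the second tensor factor. -/
def ptraceB {n m : Type*} [Fintype m] (J : Matrix (n × m) (n × m) ℂ) :
    Matrix n n ℂ :=
  Matrix.of fun i j => ∑ a, J (i, a) (j, a)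

/-- The trace norm of a matrix. -/
noncomputable def traceNorm {k : Type*} [Fintype k] [DecidableEq k]
    (X : Matrix k k ℂ) : ℝ :=
  (((Matrix.posSemidef_conjTranspose_mul_self X).isHermitian.eigenvectorUnitary : Matrix k k ℂ) *
    Matrix.diagonal ((fun x : ℝ => (x : ℂ)) ∘ Real.sqrt ∘
      (Matrix.posSemidef_conjTranspose_mul_self X).isHermitian.eigenvalues) *
    (star ((Matrix.posSemidef_conjTranspose_mul_self X).isHermitian.eigenvectorUnitary :
      Matrix k k ℂ))).trace.re

/-- Tensor product of two maps. -/
def tensorMap {n₁ n₂ m₂ : Type*} [Fintype n₁] [DecidableEq n₁]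
    (M : Matrix n₁ n₁ ℂ → Matrix n₁ n₁ ℂ) (N : Matrix n₂ n₂ ℂ → Matrix m₂ m₂ ℂ)
    (X : Matrix (n₁ × n₂) (n₁ × n₂) ℂ) : Matrix (n₁ × m₂) (n₁ × m₂) ℂ :=
  ∑ i : n₁, ∑ j : n₁,
    (M (Matrix.single i j 1)) ⊗ₖ (N (Matrix.of fun a b => X (i, a) (j, b)))

/-!
The Choi matrix of `T` is `∑ᵢ rᵢ |vec Uᵢ⟩⟨vec Uᵢ|`, and trace-orthogonality of the `Uᵢ` makes the
vectors `vec Uᵢ` mutually orthogonal of squared norm `d`. So `∑ᵢ |rᵢ| |vec Uᵢ⟩⟨vec Uᵢ|` is the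
positive square root of `J_Tᴴ J_T`, giving `‖J_T‖₁ = d ∑ᵢ |rᵢ|`.

The decomposition of `T` into the unitary channels `Uᵢ · Uᵢ†` costs `∑ᵢ |rᵢ|`. Conversely, the
witness `W = ∑ᵢ sign(rᵢ) |vec Uᵢ⟩⟨vec Uᵢ|` satisfies `-d ≤ W ≤ d`, so `|tr(W J_O)| ≤ d²` for every
channel `O` (whose Choi matrix is positive with trace `d`), while `tr(W J_T) = d² ∑ᵢ |rᵢ|`.
Pairing `W` with any decomposition `T = ∑ₐ ηₐ Oₐ` therefore gives `∑ᵢ |rᵢ| ≤ ∑ₐ |ηₐ|`.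
-/

namespace Matrix

theorem PosSemidef.trace_mul_nonneg {n : Type*} [Fintype n] [DecidableEq n]
    {A B : Matrix n n ℂ} (hA : A.PosSemidef) (hB : B.PosSemidef) : 0 ≤ (A * B).trace := by
  obtain ⟨C, rfl⟩ : ∃ C : Matrix n n ℂ, B = Cᴴ * C := by
    open scoped MatrixOrder in exact CStarAlgebra.nonneg_iff_eq_star_mul_self.mp hB.nonneg
  rw [← Matrix.mul_assoc, trace_mul_cycle]
  exact (hA.mul_mul_conjTranspose_same C).trace_nonneg

end Matrix

open scoped MatrixOrder in
theorem traceNorm_eq_re_trace_of_mul_self {k : Type*} [Fintype k] [DecidableEq k]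
    {X K : Matrix k k ℂ} (hK : K.PosSemidef) (h : K * K = Xᴴ * X) : traceNorm X = K.trace.re := by
  have hX := posSemidef_conjTranspose_mul_self X
  have hcfc : (hX.isHermitian.eigenvectorUnitary : Matrix k k ℂ) *
      diagonal ((fun x : ℝ => (x : ℂ)) ∘ Real.sqrt ∘ hX.isHermitian.eigenvalues) *
      star (hX.isHermitian.eigenvectorUnitary : Matrix k k ℂ) = cfc Real.sqrt (Xᴴ * X) := by
    rw [hX.isHermitian.cfc_eq]; rfl
  rw [traceNorm, hcfc, ← cfcₙ_eq_cfc, ← CFC.sqrt_eq_real_sqrt _ hX.nonneg,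
    CFC.sqrt_unique h hK.nonneg]

section RankOneSum

variable {ι κ : Type*} [Fintype ι]

def rankOneSum (v : ι → κ → ℂ) (a : ι → ℝ) : Matrix κ κ ℂ :=
  ∑ i, (a i : ℂ) • vecMulVec (v i) (star (v i))

variable (v : ι → κ → ℂ)

theorem rankOneSum_sub (a b : ι → ℝ) :
    rankOneSum v a - rankOneSum v b = rankOneSum v (a - b) := by
  simp [rankOneSum, sub_smul, Finset.sum_sub_distrib]

theorem rankOneSum_smul (c : ℝ) (a : ι → ℝ) :
    rankOneSum v (c • a) = (c : ℂ) • rankOneSum v a := by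
  simp only [rankOneSum, Finset.smul_sum, smul_smul, Pi.smul_apply, smul_eq_mul,
    Complex.ofReal_mul]

theorem rankOneSum_neg (a : ι → ℝ) : rankOneSum v (-a) = -rankOneSum v a := by
  simp [rankOneSum, Finset.sum_neg_distrib]

variable [Fintype κ]

theorem posSemidef_rankOneSum {a : ι → ℝ} (ha : ∀ i, 0 ≤ a i) : (rankOneSum v a).PosSemidef :=
  posSemidef_sum _ fun i _ =>
    (posSemidef_vecMulVec_self_star (v i)).smul (Complex.zero_le_real.mpr (ha i))

theorem isHermitian_rankOneSum (a : ι → ℝ) : (rankOneSum v a).IsHermitian :=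
  isSelfAdjoint_sum _ fun i _ =>
    (posSemidef_vecMulVec_self_star (v i)).isHermitian.smul (Complex.conj_ofReal (a i))

variable [DecidableEq ι] {v} {c : ℝ}

theorem rankOneSum_mul (hv : ∀ i j, star (v i) ⬝ᵥ v j = if i = j then (c : ℂ) else 0)
    (a b : ι → ℝ) :
    rankOneSum v a * rankOneSum v b = rankOneSum v (fun i => c * a i * b i) := by
  simp only [rankOneSum, Finset.sum_mul_sum, smul_mul_smul_comm, vecMulVec_mul_vecMulVec, hv,
    vecMulVec_smul, smul_smul]
  simp only [mul_ite, mul_zero, ite_smul, zero_smul, Finset.sum_ite_eq, Finset.mem_univ, if_true]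
  push_cast
  ac_rfl

theorem trace_rankOneSum (hv : ∀ i j, star (v i) ⬝ᵥ v j = if i = j then (c : ℂ) else 0)
    (a : ι → ℝ) : (rankOneSum v a).trace = (c * ∑ i, a i : ℝ) := by
  simp [rankOneSum, trace_sum, trace_vecMulVec, dotProduct_comm (v _), hv, Finset.mul_sum,
    mul_comm]

theorem traceNorm_rankOneSum [DecidableEq κ]
    (hv : ∀ i j, star (v i) ⬝ᵥ v j = if i = j then (c : ℂ) else 0) (a : ι → ℝ) :
    traceNorm (rankOneSum v a) = c * ∑ i, |a i| := by
  rw [traceNorm_eq_re_trace_of_mul_self (posSemidef_rankOneSum v fun i => abs_nonneg (a i)),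
    trace_rankOneSum hv, Complex.ofReal_re]
  rw [(isHermitian_rankOneSum v a).eq, rankOneSum_mul hv, rankOneSum_mul hv]
  simp_rw [mul_assoc, abs_mul_abs_self]

theorem posSemidef_smul_one_sub_rankOneSum [DecidableEq κ]
    (hv : ∀ i j, star (v i) ⬝ᵥ v j = if i = j then (c : ℂ) else 0) (hc : 0 < c)
    {a : ι → ℝ} (ha : ∀ i, |a i| ≤ 1) : ((c : ℂ) • 1 - rankOneSum v a).PosSemidef := by
  -- `Q` is Hermitian with `Q * Q = c • Q`, hence `Q = c⁻¹ • (Qᴴ * Q)`.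
  have hQ : ((c : ℂ) • 1 - rankOneSum v 1).PosSemidef := by
    set Q := (c : ℂ) • 1 - rankOneSum v 1
    have hS : rankOneSum v 1 * rankOneSum v 1 = (c : ℂ) • rankOneSum v 1 := by
      rw [rankOneSum_mul hv, ← rankOneSum_smul]
      congr 1
      ext i
      simp
    have hQQ : Qᴴ * Q = (c : ℂ) • Q := by
      have hQH : Qᴴ = Q := by
        simp [Q, conjTranspose_sub, (isHermitian_rankOneSum v 1).eq]
      rw [hQH]
      simp only [Q, sub_mul, mul_sub, smul_mul_smul_comm, smul_mul, Matrix.mul_smul, one_mul,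
        mul_one, hS]
      module
    have := (posSemidef_conjTranspose_mul_self Q).smul (inv_nonneg.mpr hc.le)
    rwa [hQQ, Complex.coe_smul, inv_smul_smul₀ hc.ne'] at this
  have hsplit : (c : ℂ) • 1 - rankOneSum v a =
      ((c : ℂ) • 1 - rankOneSum v 1) + rankOneSum v (1 - a) := by
    rw [← rankOneSum_sub]
    abel
  rw [hsplit]
  exact hQ.add (posSemidef_rankOneSum v fun i => sub_nonneg.mpr (abs_le.mp (ha i)).2)

theorem abs_re_trace_rankOneSum_mul_le [DecidableEq κ]
    (hv : ∀ i j, star (v i) ⬝ᵥ v j = if i = j then (c : ℂ) else 0) (hc : 0 < c)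
    {a : ι → ℝ} (ha : ∀ i, |a i| ≤ 1) {J : Matrix κ κ ℂ} (hJ : J.PosSemidef) :
    |(rankOneSum v a * J).trace.re| ≤ c * J.trace.re := by
  have key : ∀ b : ι → ℝ, (∀ i, |b i| ≤ 1) → (rankOneSum v b * J).trace.re ≤ c * J.trace.re := by
    intro b hb
    have h := (posSemidef_smul_one_sub_rankOneSum hv hc hb).trace_mul_nonneg hJ
    rw [sub_mul, trace_sub, smul_mul, one_mul, trace_smul] at h
    simpa using (Complex.le_def.mp h).1
  have hneg := key (-a) (by simpa using ha)
  rw [rankOneSum_neg, neg_mul, trace_neg, Complex.neg_re] at hneg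
  exact abs_le.mpr ⟨by linarith, key a ha⟩

end RankOneSum

section Channels

variable {n m : Type*}

theorem choiMatrix_sum_smul [DecidableEq n] {ι : Type*} [Fintype ι] (η : ι → ℂ)
    (O : ι → Matrix n n ℂ → Matrix m m ℂ) :
    choiMatrix (fun X => ∑ i, η i • O i X) = ∑ i, η i • choiMatrix (O i) := by
  ext p q
  simp [choiMatrix, Matrix.sum_apply]

variable [Fintype n]

theorem idTensor_conj {k : Type*} [Fintype k] [DecidableEq k] (V : Matrix m n ℂ)
    (M : Matrix (k × n) (k × n) ℂ) :
    idTensor k (fun X => V * X * Vᴴ) M =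
      ((1 : Matrix k k ℂ) ⊗ₖ V) * M * ((1 : Matrix k k ℂ) ⊗ₖ V)ᴴ := by
  ext ⟨a, x⟩ ⟨b, y⟩
  simp [idTensor, mul_apply, Fintype.sum_prod_type, one_apply, apply_ite (starRingEnd ℂ)]

theorem choiMatrix_conj [DecidableEq n] (V : Matrix m n ℂ) :
    choiMatrix (fun X => V * X * Vᴴ) = vecMulVec (vec V) (star (vec V)) := by
  ext ⟨a, x⟩ ⟨b, y⟩
  simp [choiMatrix, vec, vecMulVec_apply, mul_apply, single, ite_and]

variable [Fintype m]

theorem isCPTP_conj [DecidableEq n] {V : Matrix m n ℂ} (hV : Vᴴ * V = 1) :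
    IsCPTP (fun X : Matrix n n ℂ => V * X * Vᴴ) := by
  refine ⟨⟨fun X Y => by rw [Matrix.mul_add, Matrix.add_mul],
    fun a X => by simp [Matrix.mul_smul, Matrix.smul_mul]⟩, fun k M hM => ?_, fun X => ?_⟩
  · rw [idTensor_conj]
    exact hM.mul_mul_conjTranspose_same _
  · rw [trace_mul_cycle, hV, one_mul]

variable [DecidableEq n]

theorem IsCP.posSemidef_choiMatrix {N : Matrix n n ℂ → Matrix m m ℂ} (hN : IsCP N) :
    (choiMatrix N).PosSemidef := by
  let e := Fintype.equivFin n
  -- `vecMulVec ω (star ω)` is the unnormalised maximally entangled state, reindexed along `e`.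
  let ω : Fin (Fintype.card n) × n → ℂ := fun p => if p.1 = e p.2 then 1 else 0
  have hchoi : choiMatrix N =
      (idTensor _ N (vecMulVec ω (star ω))).submatrix (Prod.map e id) (Prod.map e id) := by
    ext ⟨a, x⟩ ⟨b, y⟩
    have hω : (of fun a' b' => vecMulVec ω (star ω) (e a, a') (e b, b')) = single a b 1 := by
      ext a' b'
      simp only [ω, of_apply, vecMulVec_apply, single_apply, Pi.star_apply, e.apply_eq_iff_eq,
        eq_comm]
      split_ifs <;> simp_all
    simp only [choiMatrix, idTensor, submatrix_apply, Prod.map_apply, id_eq, of_apply, hω]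
  rw [hchoi]
  exact (hN _ _ (posSemidef_vecMulVec_self_star ω)).submatrix _

theorem IsTP.trace_choiMatrix {N : Matrix n n ℂ → Matrix m m ℂ} (hN : IsTP N) :
    (choiMatrix N).trace = Fintype.card n := by
  calc (choiMatrix N).trace = ∑ a, (N (single a a 1)).trace := by
        simp [trace, choiMatrix, Fintype.sum_prod_type]
    _ = Fintype.card n := by simp [hN _]

end Channels

section MixedUnitary

variable {n m ι : Type*} [Fintype n] [DecidableEq n]

theorem choiMatrix_mixedUnitary [Fintype ι] (U : ι → Matrix n n ℂ) (r : ι → ℝ) :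
    choiMatrix (fun X => ∑ i, (r i : ℂ) • (U i * X * (U i)ᴴ)) =
      rankOneSum (fun i => vec (U i)) r := by
  simp only [choiMatrix_sum_smul, choiMatrix_conj, rankOneSum]

theorem star_vec_dotProduct_vec_of_unitary [DecidableEq ι] {U : ι → Matrix n n ℂ}
    (hU : ∀ i, U i ∈ unitaryGroup n ℂ) (horth : ∀ i j, i ≠ j → ((U i)ᴴ * U j).trace = 0)
    (i j : ι) :
    star (vec (U i)) ⬝ᵥ vec (U j) = if i = j then ((Fintype.card n : ℝ) : ℂ) else 0 := by
  rw [star_vec_dotProduct_vec]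
  split_ifs with h
  · rw [h, ← star_eq_conjTranspose, mem_unitaryGroup_iff'.mp (hU j), trace_one]
    norm_cast
  · exact horth i j h

theorem sum_abs_le_of_mem_decompCosts [Fintype ι] [DecidableEq ι] [Fintype m] [DecidableEq m]
    [Nonempty n] {T : Matrix n n ℂ → Matrix m m ℂ} {v : ι → n × m → ℂ}
    (hv : ∀ i j, star (v i) ⬝ᵥ v j = if i = j then ((Fintype.card n : ℝ) : ℂ) else 0)
    {r : ι → ℝ} (hJ : choiMatrix T = rankOneSum v r) {cost : ℝ} (hcost : cost ∈ decompCosts T) :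
    ∑ i, |r i| ≤ cost := by
  obtain ⟨k, η, O, hO, hT, rfl⟩ := hcost
  set c : ℝ := (Fintype.card n : ℝ)
  have hc : 0 < c := by positivity
  set σ : ι → ℝ := fun i => (SignType.sign (r i) : ℝ)
  have hσ : ∀ i, |σ i| ≤ 1 := fun i => by
    rcases lt_trichotomy (r i) 0 with h | h | h <;> simp [σ, h, sign_neg, sign_pos]
  have hbound : ∀ α, |(rankOneSum v σ * choiMatrix (O α)).trace.re| ≤ c * c := fun α => by
    have := abs_re_trace_rankOneSum_mul_le hv hc hσ (hO α).2.1.posSemidef_choiMatrix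
    rwa [(hO α).2.2.trace_choiMatrix] at this
  have hpair : (rankOneSum v σ * choiMatrix T).trace.re = c * c * ∑ i, |r i| := by
    rw [hJ, rankOneSum_mul hv, trace_rankOneSum hv, Complex.ofReal_re]
    simp [σ, mul_assoc, Finset.mul_sum]
  have hdecomp : (rankOneSum v σ * choiMatrix T).trace.re =
      ∑ α, η α * (rankOneSum v σ * choiMatrix (O α)).trace.re := by
    rw [show T = fun X => ∑ α, (η α : ℂ) • O α X from funext hT, choiMatrix_sum_smul]
    simp [Finset.mul_sum, trace_sum, Complex.re_sum]
  have : c * c * ∑ i, |r i| ≤ c * c * ∑ α, |η α| := by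
    rw [← hpair, hdecomp, Finset.mul_sum]
    refine Finset.sum_le_sum fun α _ => ?_
    calc η α * (rankOneSum v σ * choiMatrix (O α)).trace.re
        ≤ |η α| * |(rankOneSum v σ * choiMatrix (O α)).trace.re| := by
          rw [← abs_mul]; exact le_abs_self _
      _ ≤ c * c * |η α| := by nlinarith [hbound α, abs_nonneg (η α)]
  exact le_of_mul_le_mul_left this (by positivity)

theorem sum_abs_mem_decompCosts [Fintype ι] {U : ι → Matrix n n ℂ}
    (hU : ∀ i, U i ∈ unitaryGroup n ℂ) (r : ι → ℝ) :
    ∑ i, |r i| ∈ decompCosts (fun X => ∑ i, (r i : ℂ) • (U i * X * (U i)ᴴ)) := by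
  let e := (Fintype.equivFin ι).symm
  refine ⟨Fintype.card ι, r ∘ e, fun α X => U (e α) * X * (U (e α))ᴴ,
    fun α => isCPTP_conj (mem_unitaryGroup_iff'.mp (hU (e α))), fun X => ?_, ?_⟩
  · exact (e.sum_comp fun i => (r i : ℂ) • (U i * X * (U i)ᴴ)).symm
  · exact (e.sum_comp fun i => |r i|).symm

theorem sInf_decompCosts_mixedUnitary [Fintype ι] [DecidableEq ι] [Nonempty n]
    {U : ι → Matrix n n ℂ} (hU : ∀ i, U i ∈ unitaryGroup n ℂ)
    (horth : ∀ i j, i ≠ j → ((U i)ᴴ * U j).trace = 0) (r : ι → ℝ) :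
    sInf (decompCosts (fun X => ∑ i, (r i : ℂ) • (U i * X * (U i)ᴴ))) = ∑ i, |r i| := by
  have hlower : ∀ cost ∈ decompCosts (fun X => ∑ i, (r i : ℂ) • (U i * X * (U i)ᴴ)),
      ∑ i, |r i| ≤ cost := fun _ => sum_abs_le_of_mem_decompCosts
    (star_vec_dotProduct_vec_of_unitary hU horth) (choiMatrix_mixedUnitary U r)
  have hmem := sum_abs_mem_decompCosts hU r
  exact le_antisymm (csInf_le ⟨_, hlower⟩ hmem) (le_csInf ⟨_, hmem⟩ hlower)

end MixedUnitary

theorem nu_mixed_unitary_general {d s : ℕ} (hd : 0 < d)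
    (U : Fin s → Matrix (Fin d) (Fin d) ℂ)
    (hU : ∀ i, U i ∈ Matrix.unitaryGroup (Fin d) ℂ)
    (horth : ∀ i j, i ≠ j → ((U i)ᴴ * U j).trace = 0)
    (r : Fin s → ℝ) :
    nu (fun X => ∑ i, (r i : ℂ) • (U i * X * (U i)ᴴ)) = Real.logb 2 (∑ i, |r i|) ∧
    nu (fun X => ∑ i, (r i : ℂ) • (U i * X * (U i)ᴴ)) =
      Real.logb 2 (traceNorm (choiMatrix
        (fun X => ∑ i, (r i : ℂ) • (U i * X * (U i)ᴴ))) / d) := by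
  have : NeZero d := ⟨hd.ne'⟩
  have hcost := sInf_decompCosts_mixedUnitary hU horth r
  have hnorm : traceNorm (choiMatrix fun X => ∑ i, (r i : ℂ) • (U i * X * (U i)ᴴ)) =
      d * ∑ i, |r i| := by
    rw [choiMatrix_mixedUnitary,
      traceNorm_rankOneSum (star_vec_dotProduct_vec_of_unitary hU horth), Fintype.card_fin]
  exact ⟨by rw [nu, hcost], by rw [nu, hcost, hnorm, mul_div_cancel_left₀ _ (by positivity)]⟩

/-- for a mixed unitary map `T = ∑ᵢ rᵢ Uᵢ · Uᵢ†` with mutually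
trace-orthogonal unitaries and `∑ᵢ rᵢ = 1`,
`ν(T) = log₂(∑ᵢ |rᵢ|) = log₂(‖J_T‖₁ / d)`. -/
theorem nu_mixed_unitary {d s : ℕ} (hd : 0 < d)
    (U : Fin s → Matrix (Fin d) (Fin d) ℂ)
    (hU : ∀ i, U i ∈ Matrix.unitaryGroup (Fin d) ℂ)
    (horth : ∀ i j, i ≠ j → ((U i)ᴴ * U j).trace = 0)
    (r : Fin s → ℝ) (hr : ∑ i, r i = 1) :
    nu (fun X => ∑ i, (r i : ℂ) • (U i * X * (U i)ᴴ)) = Real.logb 2 (∑ i, |r i|) ∧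
    nu (fun X => ∑ i, (r i : ℂ) • (U i * X * (U i)ᴴ)) =
      Real.logb 2 (traceNorm (choiMatrix
        (fun X => ∑ i, (r i : ℂ) • (U i * X * (U i)ᴴ))) / d) :=
  nu_mixed_unitary_general hd U hU horth r

end
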